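/- arXiv:1110.0968 — 2 statements merged into one kernel-verified Lean document; each statement's English description precedes it below -/
import Mathlib

section
/- Let π₅ = 1 + 2i in ℤ[i] and let n be an odd positive integer. Then the highest power of 2 dividing the norm N(π₅ⁿ + 1) is 2³; that is, 8 divides N(π₅ⁿ + 1) but 16 does not. -/
/-! Since π₅² = 1 + 4(-1 + i), every odd power of π₅ is congruent to π₅ modulo 4, so
π₅ⁿ + 1 = 2w with both coordinates of w odd. A sum of two odd squares is 2 modulo 4, hence
N(π₅ⁿ + 1) = 4 N(w) is 8 modulo 16. -/

namespace GaussianInt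

lemma norm_emod_four_of_odd {w : GaussianInt} (hre : Odd w.re) (him : Odd w.im) :
    w.norm % 4 = 2 := by
  obtain ⟨a, ha⟩ := hre
  obtain ⟨b, hb⟩ := him
  have hnorm : w.norm = 2 + 4 * (a * a + a + b * b + b) := by
    rw [Zsqrtd.norm_def, ha, hb]
    ring
  omega

lemma norm_two_mul (w : GaussianInt) : (2 * w).norm = 4 * w.norm := by
  rw [Zsqrtd.norm_mul]
  rfl

lemma four_dvd_pow_sub_self_of_odd {n : ℕ} (hn : Odd n) :
    (4 : GaussianInt) ∣ (⟨1, 2⟩ : GaussianInt) ^ n - ⟨1, 2⟩ := by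
  obtain ⟨k, rfl⟩ := hn
  have hsq : (4 : GaussianInt) ∣ (⟨1, 2⟩ : GaussianInt) ^ 2 - 1 := ⟨⟨-1, 1⟩, by decide⟩
  have hpow : (4 : GaussianInt) ∣ ((⟨1, 2⟩ : GaussianInt) ^ 2) ^ k - 1 := by
    simpa only [one_pow] using hsq.trans (sub_dvd_pow_sub_pow _ 1 k)
  rw [pow_succ, pow_mul, ← sub_one_mul]
  exact Dvd.dvd.mul_right hpow _

end GaussianInt

theorem norm_pi_pow_add_one_odd_general (n : ℕ) (hodd : Odd n) :
    (8 : ℤ) ∣ Zsqrtd.norm ((⟨1, 2⟩ : GaussianInt) ^ n + 1) ∧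
      ¬ (16 : ℤ) ∣ Zsqrtd.norm ((⟨1, 2⟩ : GaussianInt) ^ n + 1) := by
  obtain ⟨u, hu⟩ := GaussianInt.four_dvd_pow_sub_self_of_odd hodd
  set w : GaussianInt := ⟨1 + 2 * u.re, 1 + 2 * u.im⟩
  have hw : (⟨1, 2⟩ : GaussianInt) ^ n + 1 = 2 * w := by
    rw [sub_eq_iff_eq_add] at hu
    rw [hu]
    ext <;> simp only [Zsqrtd.re_add, Zsqrtd.im_add, Zsqrtd.re_mul, Zsqrtd.im_mul,
      Zsqrtd.re_ofNat, Zsqrtd.im_ofNat, Zsqrtd.re_one, Zsqrtd.im_one, w] <;> ring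
  have hmod : w.norm % 4 = 2 :=
    GaussianInt.norm_emod_four_of_odd ⟨u.re, by ring⟩ ⟨u.im, by ring⟩
  rw [hw, GaussianInt.norm_two_mul]
  omega

theorem norm_pi_pow_add_one_odd (n : ℕ) (hn : 0 < n) (hodd : Odd n) :
    (8 : ℤ) ∣ Zsqrtd.norm ((⟨1, 2⟩ : GaussianInt) ^ n + 1) ∧
      ¬ (16 : ℤ) ∣ Zsqrtd.norm ((⟨1, 2⟩ : GaussianInt) ^ n + 1) :=
  norm_pi_pow_add_one_odd_general n hodd
end

section
/- Let π₅ = 1 + 2i and ρ = −1 + i in ℤ[i], and let n = 2^l·m be an even positive integer, where l ≥ 1 and m is odd. Then ρ^(3+2l) divides π₅ⁿ − 1 in ℤ[i], but ρ^(4+2l) does not. (That is, the exponent e₀ of ρ in the prime factorization of π₅ⁿ − 1 equals 3 + 2l when n is even.) -/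
/-!
Write `v` for the `ρ`-adic valuation on `ℤ[i]`. Since `ρ² = -2i`, we have `v 2 = 2`, and
`π₅² - 1 = -ρ⁵`. For odd `m`, `ρ ∤ m`, so the lifting-the-exponent lemma for a prime not dividing
the exponent gives `v (π₅^(2m) - 1) = v (π₅² - 1) = 5`. From then on each squaring adds `v 2 = 2`:
`x² - 1 = (x - 1) ((x - 1) + 2)`, and `v (x - 1) > v 2` forces `v ((x - 1) + 2) = v 2`.
Hence `v (π₅^(2^l m) - 1) = 5 + 2 (l - 1) = 3 + 2l`.
-/

theorem Zsqrtd.irreducible_of_natAbs_norm_prime {d : ℤ} {x : ℤ√d} (hx : x.norm.natAbs.Prime) :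
    Irreducible x where
  not_isUnit hu := by
    rw [← Zsqrtd.norm_eq_one_iff] at hu
    exact hx.ne_one hu
  isUnit_or_isUnit a b hab := by
    simp only [← Zsqrtd.norm_eq_one_iff]
    rw [hab, Zsqrtd.norm_mul, Int.natAbs_mul] at hx
    exact (Nat.prime_mul_iff.1 hx).symm.imp (·.2) (·.2)

theorem not_dvd_natCast_of_dvd_two_of_odd {R : Type*} [CommRing R] {p : R} (hp : ¬IsUnit p)
    (h2 : p ∣ 2) {m : ℕ} (hm : Odd m) : ¬p ∣ (m : R) := by
  obtain ⟨k, rfl⟩ := hm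
  intro h
  push_cast at h
  exact hp (isUnit_of_dvd_one ((dvd_add_right (h2.mul_right _)).1 h))

section SquaringStep

variable {R : Type*} [CommRing R] [IsDomain R] {p : R}

theorem emultiplicity_sq_sub_one_of_lt (hp : Prime p) {x : R}
    (h : emultiplicity p 2 < emultiplicity p (x - 1)) :
    emultiplicity p (x ^ 2 - 1) = emultiplicity p (x - 1) + emultiplicity p 2 := by
  have hfactor : x ^ 2 - 1 = (x - 1) * ((x - 1) + 2) := by ring
  rw [hfactor, emultiplicity_mul hp, emultiplicity_add_of_gt h]

theorem emultiplicity_pow_two_pow_sub_one_of_lt (hp : Prime p) {x : R}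
    (h : emultiplicity p 2 < emultiplicity p (x - 1)) (k : ℕ) :
    emultiplicity p (x ^ 2 ^ k - 1) = emultiplicity p (x - 1) + k * emultiplicity p 2 := by
  induction k with
  | zero => simp
  | succ k ih =>
    have hlt : emultiplicity p 2 < emultiplicity p (x ^ 2 ^ k - 1) :=
      ih ▸ h.trans_le le_self_add
    rw [pow_succ, pow_mul, emultiplicity_sq_sub_one_of_lt hp hlt, ih]
    push_cast
    ring

end SquaringStep

namespace GaussianInt

local notation "ρ" => (⟨-1, 1⟩ : GaussianInt)
local notation "π₅" => (⟨1, 2⟩ : GaussianInt)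

theorem prime_neg_one_add_I : Prime ρ :=
  irreducible_iff_prime.1 (Zsqrtd.irreducible_of_natAbs_norm_prime (by decide))

theorem two_eq_neg_one_add_I_sq_mul_I : (2 : GaussianInt) = ρ ^ 2 * ⟨0, 1⟩ := by decide

theorem emultiplicity_neg_one_add_I_two : emultiplicity ρ 2 = 2 := by
  have hI : IsUnit (⟨0, 1⟩ : GaussianInt) := Zsqrtd.norm_eq_one_iff.1 (by decide)
  rw [two_eq_neg_one_add_I_sq_mul_I, emultiplicity_mul prime_neg_one_add_I,
    emultiplicity_pow_self_of_prime prime_neg_one_add_I,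
    emultiplicity_of_isUnit_right prime_neg_one_add_I.not_isUnit hI]
  rfl

theorem emultiplicity_neg_one_add_I_one_add_two_I_sq_pow_sub_one {m : ℕ} (hm : Odd m) :
    emultiplicity ρ ((π₅ ^ 2) ^ m - 1) = 5 := by
  have hρ := prime_neg_one_add_I
  have hsq : π₅ ^ 2 - 1 = -ρ ^ 5 := by decide
  have hdvd : ρ ∣ π₅ ^ 2 - 1 := hsq ▸ (dvd_pow_self ρ (by norm_num)).neg_right
  have hndvd : ¬ρ ∣ π₅ ^ 2 := fun h ↦
    hρ.not_isUnit (isUnit_of_dvd_one (by simpa using dvd_sub h hdvd))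
  have hm' : ¬ρ ∣ (m : GaussianInt) := not_dvd_natCast_of_dvd_two_of_odd hρ.not_isUnit
    (two_eq_neg_one_add_I_sq_mul_I ▸ (dvd_pow_self ρ two_ne_zero).mul_right _) hm
  rw [← (one_pow m : (1 : GaussianInt) ^ m = 1),
    emultiplicity_pow_sub_pow_of_prime hρ hdvd hndvd hm', hsq, emultiplicity_neg,
    emultiplicity_pow_self_of_prime hρ]
  rfl

theorem emultiplicity_neg_one_add_I_one_add_two_I_pow_sub_one {l m : ℕ} (hl : 1 ≤ l)
    (hm : Odd m) : emultiplicity ρ (π₅ ^ (2 ^ l * m) - 1) = ↑(3 + 2 * l) := by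
  obtain ⟨k, rfl⟩ : ∃ k, l = k + 1 := ⟨l - 1, by omega⟩
  have hv := emultiplicity_neg_one_add_I_one_add_two_I_sq_pow_sub_one hm
  have hlt : emultiplicity ρ 2 < emultiplicity ρ ((π₅ ^ 2) ^ m - 1) := by
    rw [hv, emultiplicity_neg_one_add_I_two]
    norm_num
  rw [show 2 ^ (k + 1) * m = 2 * m * 2 ^ k by ring, pow_mul, pow_mul,
    emultiplicity_pow_two_pow_sub_one_of_lt prime_neg_one_add_I hlt, hv,
    emultiplicity_neg_one_add_I_two]
  push_cast
  ring

end GaussianInt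

theorem rho_valuation_pi_pow_sub_one_even (l m : ℕ) (hl : 1 ≤ l) (hm : Odd m) :
    (⟨-1, 1⟩ : GaussianInt) ^ (3 + 2 * l) ∣ (⟨1, 2⟩ : GaussianInt) ^ (2 ^ l * m) - 1 ∧
      ¬ (⟨-1, 1⟩ : GaussianInt) ^ (4 + 2 * l) ∣ (⟨1, 2⟩ : GaussianInt) ^ (2 ^ l * m) - 1 := by
  rw [show 4 + 2 * l = 3 + 2 * l + 1 by ring]
  exact emultiplicity_eq_coe.1
    (GaussianInt.emultiplicity_neg_one_add_I_one_add_two_I_pow_sub_one hl hm)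
end
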